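/- If F : C ⥤ X is a special weak bifibration between categories with pullbacks that preserves pullbacks and reflects monomorphisms, then a morphism m in C is a pullback stable essential monomorphism if and only if F(m) is a pullback stable essential monomorphism in X. -/

import Mathlib

open CategoryTheory Limits

/-- A morphism `m` is an essential monomorphism if it is a monomorphism and every
morphism `f` such that `m ≫ f` is a monomorphism is itself a monomorphism. -/
def IsEssentialMono {C : Type*} [CategoryTheory.Category C] {S A : C} (m : S ⟶ A) : Prop :=
  CategoryTheory.Mono m ∧
    ∀ ⦃B : C⦄ (f : A ⟶ B), CategoryTheory.Mono (m ≫ f) → CategoryTheory.Mono f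

/-- A morphism `m : S ⟶ A` is a pullback stable essential monomorphism if for every
morphism `u : X ⟶ A` the pullback projection `S ×_A X ⟶ X` of `m` along `u` is an
essential monomorphism. -/
def IsStableEssentialMono {C : Type*} [CategoryTheory.Category C]
    [CategoryTheory.Limits.HasPullbacks C] {S A : C} (m : S ⟶ A) : Prop :=
  ∀ ⦃X : C⦄ (u : X ⟶ A), IsEssentialMono (CategoryTheory.Limits.pullback.snd m u)

/-- A functor `F : C ⥤ X` is a special weak fibration if for every object `c` of `C` and
every morphism `u : x ⟶ F c` there exist `f : U ⟶ c` in `C` and an isomorphism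
`φ : F U ≅ x` with `F f = φ.hom ≫ u`. -/
def IsSpecialWeakFibration {C : Type*} [Category C] {X : Type*} [Category X]
    (F : C ⥤ X) : Prop :=
  ∀ (c : C) ⦃x : X⦄ (u : x ⟶ F.obj c), ∃ (U : C) (f : U ⟶ c) (φ : F.obj U ≅ x),
    F.map f = φ.hom ≫ u

/-- A functor `F : C ⥤ X` is a weak opfibration if for every object `c` of `C` and every
morphism `v : F c ⟶ y` there exist `g : c ⟶ V` in `C` and a monomorphism `ψ : y ⟶ F V`
with `F g = v ≫ ψ`. -/
def IsWeakOpfibration {C : Type*} [Category C] {X : Type*} [Category X] (F : C ⥤ X) : Prop :=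
  ∀ (c : C) ⦃y : X⦄ (v : F.obj c ⟶ y), ∃ (V : C) (g : c ⟶ V) (ψ : y ⟶ F.obj V),
    Mono ψ ∧ F.map g = v ≫ ψ

/-- A functor is a special weak bifibration if it is both a special weak fibration and a
weak opfibration. -/
def IsSpecialWeakBifibration {C : Type*} [Category C] {X : Type*} [Category X]
    (F : C ⥤ X) : Prop :=
  IsSpecialWeakFibration F ∧ IsWeakOpfibration F

/-!
An essential monomorphism `p` is carried by `F` to an essential monomorphism: if `F p ≫ g`
is mono, lift `g` along the weak opfibration to `F k = g ≫ ψ` with `ψ` mono; then `F (p ≫ k)`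
is mono, hence so are `p ≫ k`, `k`, `F k` and finally `g`. Conversely `F` reflects essential
monomorphisms because it preserves and reflects monomorphisms. As `F` preserves pullbacks,
`F` of the pullback of `m` along `f` is the pullback of `F m` along `F f`, and since `F` is a
special weak fibration every `u : Y ⟶ F A` is of the form `F f` up to an isomorphism.
-/

section

variable {C : Type*} [Category C]

lemma IsEssentialMono.iso_comp {P' P A : C} (e : P' ⟶ P) [IsIso e] {p : P ⟶ A}
    (h : IsEssentialMono p) : IsEssentialMono (e ≫ p) := by
  have := h.1
  refine ⟨mono_comp _ _, fun B f hf => h.2 f ?_⟩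
  simpa using mono_comp (inv e) ((e ≫ p) ≫ f)

lemma IsEssentialMono.comp_iso {P A A' : C} {p : P ⟶ A} (w : A ⟶ A') [IsIso w]
    (h : IsEssentialMono p) : IsEssentialMono (p ≫ w) := by
  have := h.1
  refine ⟨mono_comp _ _, fun B f hf => ?_⟩
  have : Mono (w ≫ f) := h.2 _ (by simpa using hf)
  simpa using mono_comp (inv w) (w ≫ f)

lemma CategoryTheory.IsPullback.isEssentialMono_snd_iff {P X Y Z : C} {fst : P ⟶ X}
    {snd : P ⟶ Y} {f : X ⟶ Z} {g : Y ⟶ Z} [HasPullback f g] (h : IsPullback fst snd f g) :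
    IsEssentialMono snd ↔ IsEssentialMono (pullback.snd f g) := by
  rw [← h.isoPullback_hom_snd]
  exact ⟨fun hs => by simpa using hs.iso_comp h.isoPullback.inv, fun hs => hs.iso_comp _⟩

variable {X : Type*} [Category X] (F : C ⥤ X) [F.ReflectsMonomorphisms]

lemma IsEssentialMono.map_of_isWeakOpfibration [F.PreservesMonomorphisms]
    (hop : IsWeakOpfibration F) {P U : C} {p : P ⟶ U} (h : IsEssentialMono p) :
    IsEssentialMono (F.map p) := by
  have := h.1
  refine ⟨F.map_mono p, fun B g hg => ?_⟩
  obtain ⟨V, k, ψ, hψ, hk⟩ := hop U g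
  have hFpk : Mono (F.map (p ≫ k)) := by
    rw [F.map_comp, hk, ← Category.assoc]
    exact mono_comp _ _
  have : Mono k := h.2 k (F.mono_of_mono_map hFpk)
  have : Mono (g ≫ ψ) := hk ▸ F.map_mono k
  exact mono_of_mono g ψ

lemma IsEssentialMono.of_map [F.PreservesMonomorphisms] {P U : C} {p : P ⟶ U}
    (h : IsEssentialMono (F.map p)) : IsEssentialMono p := by
  refine ⟨F.mono_of_mono_map h.1, fun B f hf => F.mono_of_mono_map (h.2 _ ?_)⟩
  rw [← F.map_comp]
  exact F.map_mono _

variable [HasPullbacks C] [HasPullbacks X] [PreservesLimitsOfShape WalkingCospan F]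
  {S A : C} {m : S ⟶ A}

lemma IsStableEssentialMono.map (hm : IsStableEssentialMono m)
    (hfib : IsSpecialWeakFibration F) (hop : IsWeakOpfibration F) :
    IsStableEssentialMono (F.map m) := by
  intro Y u
  obtain ⟨U, f, φ, hf⟩ := hfib A u
  have hsq : IsPullback (F.map (pullback.fst m f)) (F.map (pullback.snd m f) ≫ φ.hom)
      (F.map m) u :=
    ((IsPullback.of_hasPullback m f).map F).of_iso (Iso.refl _) (Iso.refl _) φ (Iso.refl _)
      (by simp) (by simp) (by simp) (by simp [hf])
  exact hsq.isEssentialMono_snd_iff.mp (((hm f).map_of_isWeakOpfibration F hop).comp_iso φ.hom)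

lemma IsStableEssentialMono.of_map (hm : IsStableEssentialMono (F.map m)) :
    IsStableEssentialMono m := fun _ u =>
  .of_map F (((IsPullback.of_hasPullback m u).map F).isEssentialMono_snd_iff.mpr (hm (F.map u)))

end

/-- If `F` is a special weak bifibration that preserves pullbacks and reflects
monomorphisms, then `m` is a pullback stable essential monomorphism iff `F.map m` is. -/
theorem stableEssentialMono_iff_of_specialWeakBifibration {C : Type*} [Category C]
    {X : Type*} [Category X] [HasPullbacks C] [HasPullbacks X] (F : C ⥤ X)
    [PreservesLimitsOfShape WalkingCospan F] [F.ReflectsMonomorphisms]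
    (hF : IsSpecialWeakBifibration F) {S A : C} (m : S ⟶ A) :
    IsStableEssentialMono m ↔ IsStableEssentialMono (F.map m) := by
  exact ⟨fun hm => hm.map F hF.1 hF.2, fun hm => .of_map F hm⟩
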